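/- (Snake Lemma, kernel of the connecting morphism) In the setting of the snake lemma for semimodules, assume additionally that α₂ is k-uniform. Then the kernel of the connecting morphism δ : Ker(α₃) → Coker(α₁) equals the subtractive closure (inside Ker(α₃)) of g₁(Ker(α₂)), i.e., Ker(δ) = {k₃ ∈ Ker(α₃) | k₃ + g₁(k) = g₁(k') for some k, k' ∈ Ker(α₂)}. -/

import Mathlib

/-- `γ` is `k`-uniform. -/
def KUniform {S X Y : Type*} [Semiring S] [AddCommMonoid X] [Module S X]
    [AddCommMonoid Y] [Module S Y] (γ : X →ₗ[S] Y) : Prop :=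
  ∀ x₁ x₂ : X, γ x₁ = γ x₂ →
    ∃ k₁ k₂ : X, γ k₁ = 0 ∧ γ k₂ = 0 ∧ x₁ + k₁ = x₂ + k₂

/-- Exactness of `A →f B →g C`: `f(A) = Ker(g)` and `g` is `k`-uniform. -/
def IsExactSeq {S A B C : Type*} [Semiring S] [AddCommMonoid A] [Module S A]
    [AddCommMonoid B] [Module S B] [AddCommMonoid C] [Module S C]
    (f : A →ₗ[S] B) (g : B →ₗ[S] C) : Prop :=
  Set.range ⇑f = {b : B | g b = 0} ∧ KUniform g

/-- The Bourne congruence on the codomain of `γ` induced by the image of `γ`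
(whose quotient is `Coker γ`). -/
def imRel {S X Y : Type*} [Semiring S] [AddCommMonoid X] [Module S X]
    [AddCommMonoid Y] [Module S Y] (γ : X →ₗ[S] Y) : Y → Y → Prop :=
  fun y₁ y₂ => ∃ x₁ x₂ : X, y₁ + γ x₁ = y₂ + γ x₂

/-!
An element `k₃ = g₁ m₁` has `δ k₃ = [l₂] = 0` iff `l₂ + α₁ x₁ = α₁ x₂` for some `x₁, x₂`.
Pushing such an equation into `M₂` through the left square gives
`α₂ (m₁ + f₁ x₁) = α₂ (f₁ x₂)`, which `k`-uniformity of `α₂` turns into an equation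
`m₁ + f₁ x₁ + k = f₁ x₂ + k'` with `k, k' ∈ Ker α₂`; applying `g₁` kills the `f₁`-terms.
Conversely, `k`-uniformity of `g₁` and `Ker g₁ = f₁(L₁)` lift `g₁ (m₁ + k) = g₁ k'` to
`m₁ + k + f₁ a₁ = k' + f₁ a₂`; applying `α₂` and cancelling the injective `f₂` gives
`l₂ + α₁ a₁ = α₁ a₂`.
-/

section

variable {S X Y : Type*} [Semiring S] [AddCommMonoid X] [Module S X]
  [AddCommMonoid Y] [Module S Y]

theorem imRel_equivalence (γ : X →ₗ[S] Y) : Equivalence (imRel γ) where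
  refl _ := ⟨0, 0, rfl⟩
  symm := fun ⟨x₁, x₂, h⟩ => ⟨x₂, x₁, h.symm⟩
  trans := by
    rintro y₁ y₂ y₃ ⟨a, b, hab⟩ ⟨c, d, hcd⟩
    refine ⟨a + c, d + b, ?_⟩
    calc y₁ + γ (a + c) = y₂ + γ c + γ b := by rw [map_add, ← add_assoc, hab, add_right_comm]
      _ = y₃ + γ (d + b) := by rw [hcd, map_add, add_assoc]

theorem quot_mk_imRel_eq_iff (γ : X →ₗ[S] Y) (y₁ y₂ : Y) :
    Quot.mk (imRel γ) y₁ = Quot.mk (imRel γ) y₂ ↔ imRel γ y₁ y₂ := by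
  rw [Quot.eq, (imRel_equivalence γ).eqvGen_iff]

end

namespace IsExactSeq

variable {S A B C : Type*} [Semiring S] [AddCommMonoid A] [Module S A]
  [AddCommMonoid B] [Module S B] [AddCommMonoid C] [Module S C]
  {f : A →ₗ[S] B} {g : B →ₗ[S] C}

theorem comp_eq_zero (h : IsExactSeq f g) : g ∘ₗ f = 0 := by
  ext a
  have ha : f a ∈ Set.range f := ⟨a, rfl⟩
  rwa [h.1] at ha

theorem exists_eq_of_apply_eq_zero (h : IsExactSeq f g) {b : B} (hb : g b = 0) :
    ∃ a, f a = b := by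
  rwa [← Set.mem_range, h.1]

end IsExactSeq

section SnakeSquare

variable {S L₁ M₁ N₁ L₂ M₂ : Type*} [Semiring S]
  [AddCommMonoid L₁] [Module S L₁] [AddCommMonoid M₁] [Module S M₁]
  [AddCommMonoid N₁] [Module S N₁] [AddCommMonoid L₂] [Module S L₂]
  [AddCommMonoid M₂] [Module S M₂]
  {f₁ : L₁ →ₗ[S] M₁} {g₁ : M₁ →ₗ[S] N₁} {f₂ : L₂ →ₗ[S] M₂}
  {α₁ : L₁ →ₗ[S] L₂} {α₂ : M₁ →ₗ[S] M₂} {m₁ : M₁} {l₂ : L₂}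

theorem exists_ker_add_eq_of_imRel_zero (hgf : g₁ ∘ₗ f₁ = 0)
    (hc₁ : α₂ ∘ₗ f₁ = f₂ ∘ₗ α₁) (hα₂ : KUniform α₂) (hl : f₂ l₂ = α₂ m₁)
    (hrel : imRel α₁ l₂ 0) :
    ∃ k k' : M₁, α₂ k = 0 ∧ α₂ k' = 0 ∧ g₁ m₁ + g₁ k = g₁ k' := by
  obtain ⟨x₁, x₂, hx⟩ := hrel
  have hsq (a : L₁) : α₂ (f₁ a) = f₂ (α₁ a) := LinearMap.congr_fun hc₁ a
  have hlift : α₂ (m₁ + f₁ x₁) = α₂ (f₁ x₂) := by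
    rw [map_add, ← hl, hsq, hsq, ← map_add, hx, zero_add]
  obtain ⟨k, k', hk, hk', hsum⟩ := hα₂ _ _ hlift
  refine ⟨k, k', hk, hk', ?_⟩
  have hgf' (a : L₁) : g₁ (f₁ a) = 0 := LinearMap.congr_fun hgf a
  simpa only [map_add, hgf', add_zero, zero_add] using congrArg g₁ hsum

theorem imRel_zero_of_exists_ker_add_eq (hrow₁ : IsExactSeq f₁ g₁)
    (hc₁ : α₂ ∘ₗ f₁ = f₂ ∘ₗ α₁) (hf₂ : Function.Injective f₂) (hl : f₂ l₂ = α₂ m₁)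
    {k k' : M₁} (hk : α₂ k = 0) (hk' : α₂ k' = 0) (hsum : g₁ m₁ + g₁ k = g₁ k') :
    imRel α₁ l₂ 0 := by
  obtain ⟨h₁, h₂, hh₁, hh₂, hs⟩ := hrow₁.2 (m₁ + k) k' (by rw [map_add, hsum])
  obtain ⟨a₁, rfl⟩ := hrow₁.exists_eq_of_apply_eq_zero hh₁
  obtain ⟨a₂, rfl⟩ := hrow₁.exists_eq_of_apply_eq_zero hh₂
  have hsq (a : L₁) : α₂ (f₁ a) = f₂ (α₁ a) := LinearMap.congr_fun hc₁ a
  refine ⟨a₁, a₂, hf₂ ?_⟩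
  have hpush := congrArg α₂ hs
  rw [map_add, map_add, map_add, hk, hk', add_zero, zero_add, ← hl, hsq, hsq] at hpush
  rwa [zero_add, map_add]

end SnakeSquare

theorem snake_ker_delta_general {S L₁ M₁ N₁ L₂ M₂ N₂ : Type*} [Semiring S]
    [AddCommMonoid L₁] [Module S L₁] [AddCommMonoid M₁] [Module S M₁]
    [AddCommMonoid N₁] [Module S N₁] [AddCommMonoid L₂] [Module S L₂]
    [AddCommMonoid M₂] [Module S M₂] [AddCommMonoid N₂] [Module S N₂]
    (f₁ : L₁ →ₗ[S] M₁) (g₁ : M₁ →ₗ[S] N₁) (f₂ : L₂ →ₗ[S] M₂)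
    (α₁ : L₁ →ₗ[S] L₂) (α₂ : M₁ →ₗ[S] M₂) (α₃ : N₁ →ₗ[S] N₂)
    (hc₁ : α₂.comp f₁ = f₂.comp α₁)
    (hrow₁ : IsExactSeq f₁ g₁)
    (hf₂ : Function.Injective ⇑f₂)
    (hα₂ : KUniform α₂) :
    ∀ (k₃ : N₁) (m₁ : M₁) (l₂ : L₂), α₃ k₃ = 0 → g₁ m₁ = k₃ → f₂ l₂ = α₂ m₁ →
      (Quot.mk (imRel α₁) l₂ = Quot.mk (imRel α₁) 0 ↔
        ∃ k k' : M₁, α₂ k = 0 ∧ α₂ k' = 0 ∧ k₃ + g₁ k = g₁ k') := by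
  rintro k₃ m₁ l₂ - rfl hl
  rw [quot_mk_imRel_eq_iff]
  exact ⟨exists_ker_add_eq_of_imRel_zero hrow₁.comp_eq_zero hc₁ hα₂ hl,
    fun ⟨_, _, hk, hk', hsum⟩ => imRel_zero_of_exists_ker_add_eq hrow₁ hc₁ hf₂ hl hk hk' hsum⟩

/-- Snake Lemma, kernel of the connecting morphism: in the snake
lemma setting, if `α₂` is `k`-uniform then `Ker δ` equals the subtractive closure
inside `Ker α₃` of `g₁(Ker α₂)`: for `k₃ ∈ Ker α₃` with representatives
`g₁ m₁ = k₃`, `f₂ l₂ = α₂ m₁`, one has `δ(k₃) = [l₂] = 0` iff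
`k₃ + g₁ k = g₁ k'` for some `k, k' ∈ Ker α₂`. -/
theorem snake_ker_delta {S L₁ M₁ N₁ L₂ M₂ N₂ : Type*} [Semiring S]
    [AddCommMonoid L₁] [Module S L₁] [AddCommMonoid M₁] [Module S M₁]
    [AddCommMonoid N₁] [Module S N₁] [AddCommMonoid L₂] [Module S L₂]
    [AddCommMonoid M₂] [Module S M₂] [AddCommMonoid N₂] [Module S N₂]
    (f₁ : L₁ →ₗ[S] M₁) (g₁ : M₁ →ₗ[S] N₁) (f₂ : L₂ →ₗ[S] M₂) (g₂ : M₂ →ₗ[S] N₂)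
    (α₁ : L₁ →ₗ[S] L₂) (α₂ : M₁ →ₗ[S] M₂) (α₃ : N₁ →ₗ[S] N₂)
    (hc₁ : α₂.comp f₁ = f₂.comp α₁) (hc₂ : α₃.comp g₁ = g₂.comp α₂)
    (hrow₁ : IsExactSeq f₁ g₁) (hg₁ : Function.Surjective ⇑g₁)
    (hrow₂ : IsExactSeq f₂ g₂) (hf₂ : Function.Injective ⇑f₂)
    (hα₂ : KUniform α₂) :
    ∀ (k₃ : N₁) (m₁ : M₁) (l₂ : L₂), α₃ k₃ = 0 → g₁ m₁ = k₃ → f₂ l₂ = α₂ m₁ →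
      (Quot.mk (imRel α₁) l₂ = Quot.mk (imRel α₁) 0 ↔
        ∃ k k' : M₁, α₂ k = 0 ∧ α₂ k' = 0 ∧ k₃ + g₁ k = g₁ k') :=
  snake_ker_delta_general f₁ g₁ f₂ α₁ α₂ α₃ hc₁ hrow₁ hf₂ hα₂
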